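/- Let n ≥ 2 and let G be a finite simple graph on n vertices. Then χ_{vi,1}(G) = 2n if and only if G is isomorphic to the complete graph K_n. -/

import Mathlib

open SimpleGraph

variable {V : Type*}

/-- An *incidence* of `G`: a pair `(v, e)` where `e` is an edge of `G` and `v ∈ e`. -/
abbrev Inc (G : SimpleGraph V) : Type _ :=
  {p : V × Sym2 V // p.2 ∈ G.edgeSet ∧ p.1 ∈ p.2}

/-- The elements to be colored in a vi-simultaneous coloring: vertices together with
incidences. -/
abbrev VIElem (G : SimpleGraph V) : Type _ := V ⊕ Inc G

/-- Adjacency between elements of `V(G) ∪ I(G)`: two vertices are adjacent when they are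
adjacent in `G`; a vertex `u` and an incidence `(w, f)` are adjacent when `u ∈ f`; two
distinct incidences `(v, e)`, `(w, f)` are adjacent when `v = w`, or `e = f`, or
`{v, w} = e`, or `{v, w} = f`. -/
def VIAdj (G : SimpleGraph V) : VIElem G → VIElem G → Prop
  | Sum.inl u, Sum.inl w => G.Adj u w
  | Sum.inl u, Sum.inr i => u ∈ i.1.2
  | Sum.inr i, Sum.inl u => u ∈ i.1.2
  | Sum.inr i, Sum.inr j => i ≠ j ∧
      (i.1.1 = j.1.1 ∨ i.1.2 = j.1.2 ∨ s(i.1.1, j.1.1) = i.1.2 ∨ s(i.1.1, j.1.1) = j.1.2)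

/-- A vi-simultaneous proper `k`-coloring of `G`: adjacent or incident elements of
`V(G) ∪ I(G)` receive distinct colors. -/
def IsVIColoring (G : SimpleGraph V) {k : ℕ} (c : VIElem G → Fin k) : Prop :=
  ∀ a b, VIAdj G a b → c a ≠ c b

/-- The vi-simultaneous chromatic number `χ_vi(G)`: the least `k` admitting a
vi-simultaneous proper `k`-coloring. -/
noncomputable def chiVI (G : SimpleGraph V) : ℕ :=
  sInf {k | ∃ c : VIElem G → Fin k, IsVIColoring G c}

/-- `I₂(v)`: the set of second incidences of a vertex `v`, i.e. incidences `(u, e)` with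
`e = {u, v}` and `u ≠ v`. -/
def I2 (G : SimpleGraph V) (v : V) : Set (Inc G) :=
  {i | i.1.1 ≠ v ∧ i.1.2 = s(i.1.1, v)}

/-- A vi-simultaneous `(k, s)`-coloring: a vi-simultaneous proper `k`-coloring in which at
most `s` distinct colors appear on `I₂(v)` for every vertex `v`. -/
def IsVISColoring (G : SimpleGraph V) (s : ℕ) {k : ℕ} (c : VIElem G → Fin k) : Prop :=
  IsVIColoring G c ∧ ∀ v : V, ((fun i => c (Sum.inr i)) '' I2 G v).ncard ≤ s

/-- `χ_{vi,s}(G)`: the least `k` admitting a vi-simultaneous `(k, s)`-coloring. -/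
noncomputable def chiVIS (G : SimpleGraph V) (s : ℕ) : ℕ :=
  sInf {k | ∃ c : VIElem G → Fin k, IsVISColoring G s c}

/-- The maximum degree `Δ(G)` of a finite graph. -/
noncomputable def maxDeg [Fintype V] (G : SimpleGraph V) : ℕ :=
  Finset.univ.sup fun v => (G.neighborSet v).ncard

/-!
Colour the vertices by a proper colouring of `G` and every incidence `(u, {u, v})` by a colour
reserved for `v`; incidences sharing their second endpoint are never adjacent, so this is a
vi-simultaneous `(χ(G) + n, 1)`-colouring. If `G` is not complete, `χ(G) ≤ n - 1`.
Conversely, in `K_n` all of `I₂(v)` carries a single colour `f v`, and the `2n` colours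
`c v`, `f v` are pairwise distinct: `v` lies on an edge of some second incidence of each
vertex, and `(v, vw)`, `(w, vw)` share their edge.
-/

namespace Inc

variable {G : SimpleGraph V}

noncomputable def other (i : Inc G) : V := Sym2.Mem.other i.2.2

lemma mk_other (i : Inc G) : s(i.1.1, i.other) = i.1.2 :=
  Sym2.other_spec i.2.2

lemma other_ne (i : Inc G) : i.other ≠ i.1.1 :=
  Sym2.other_ne (G.not_isDiag_of_mem_edgeSet i.2.1) i.2.2

end Inc

section

variable {G : SimpleGraph V}

lemma mem_I2_iff {i : Inc G} {v : V} : i ∈ I2 G v ↔ i.other = v := by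
  constructor
  · rintro ⟨-, he⟩
    exact Sym2.congr_right.mp (i.mk_other.trans he)
  · rintro rfl
    exact ⟨i.other_ne.symm, i.mk_other.symm⟩

lemma color_eq_of_mem_I2 {k : ℕ} {c : VIElem G → Fin k}
    (hc : IsVISColoring G 1 c) {v : V} {i j : Inc G} (hi : i ∈ I2 G v) (hj : j ∈ I2 G v) :
    c (Sum.inr i) = c (Sum.inr j) :=
  (Set.ncard_le_one_iff).mp (hc.2 v) ⟨i, hi, rfl⟩ ⟨j, hj, rfl⟩

lemma not_viAdj_of_other_eq {i j : Inc G} (hij : i ≠ j) (h : i.other = j.other) :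
    ¬ VIAdj G (Sum.inr i) (Sum.inr j) := by
  have hi := i.mk_other
  have hj := j.mk_other
  have hfst : i.1.1 ≠ j.1.1 := fun heq =>
    hij (Subtype.ext (Prod.ext heq (by rw [← hi, ← hj, heq, h])))
  rintro ⟨-, hv | he | he | he⟩
  · exact hfst hv
  · rw [← hi, ← hj, h] at he
    exact hfst (Sym2.congr_left.mp he)
  · rw [← hi] at he
    exact j.other_ne (h ▸ Sym2.congr_right.mp he).symm
  · rw [← hj, Sym2.eq_iff] at he
    rcases he with ⟨he, -⟩ | ⟨he, -⟩
    · exact hfst he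
    · exact i.other_ne (h.trans he.symm)

lemma isVISColoring_one_sumMap {m n : ℕ} (g : G.Coloring (Fin m)) (e : V ↪ Fin n) :
    IsVISColoring G 1 fun x => finSumFinEquiv (Sum.map g (fun i => e i.other) x) := by
  refine ⟨?_, fun v => ?_⟩
  · rintro (u | i) (w | j) hadj hc <;> simp only [Sum.map_inl, Sum.map_inr,
      EmbeddingLike.apply_eq_iff_eq, reduceCtorEq, Sum.inl.injEq, Sum.inr.injEq] at hc
    · exact g.valid hadj hc
    · exact not_viAdj_of_other_eq hadj.1 hc hadj
  · rw [Set.ncard_le_one_iff]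
    rintro _ _ ⟨i, hi, rfl⟩ ⟨j, hj, rfl⟩
    rw [mem_I2_iff] at hi hj
    simp only [Sum.map_inr, hi, hj]

lemma chiVIS_one_le_of_colorable [Fintype V] {m : ℕ} (h : G.Colorable m) :
    chiVIS G 1 ≤ m + Fintype.card V :=
  Nat.sInf_le ⟨_, isVISColoring_one_sumMap h.some (Fintype.equivFin V).toEmbedding⟩

lemma exists_colorable_lt_card_of_ne_top [Fintype V] (h : G ≠ ⊤) :
    ∃ m < Fintype.card V, G.Colorable m := by
  have hlt : G.chromaticNumber < Fintype.card V :=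
    chromaticNumber_le_card.lt_of_ne (mt eq_top_of_chromaticNumber_eq_card h)
  obtain ⟨m, hm⟩ := ENat.ne_top_iff_exists.mp hlt.ne_top
  rw [← hm] at hlt
  exact ⟨m, by exact_mod_cast hlt, chromaticNumber_le_iff_colorable.mp hm.ge⟩

lemma chiVIS_one_lt_of_ne_top [Fintype V] (h : G ≠ ⊤) :
    chiVIS G 1 < 2 * Fintype.card V := by
  obtain ⟨m, hm, hG⟩ := exists_colorable_lt_card_of_ne_top h
  have := chiVIS_one_le_of_colorable hG
  omega

end

section

def topInc {u v : V} (h : u ≠ v) : Inc (⊤ : SimpleGraph V) :=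
  ⟨(u, s(u, v)), (top_adj u v).mpr h, Sym2.mem_mk_left u v⟩

lemma topInc_mem_I2 {u v : V} (h : u ≠ v) : topInc h ∈ I2 ⊤ v := ⟨h, rfl⟩

variable [Nontrivial V]

lemma exists_mem_I2_top_edge_mem (x v : V) : ∃ i ∈ I2 (⊤ : SimpleGraph V) v, x ∈ i.1.2 := by
  by_cases hxv : x = v
  · obtain ⟨u, hu⟩ := exists_ne v
    exact ⟨topInc hu, topInc_mem_I2 hu, hxv ▸ Sym2.mem_mk_right u v⟩
  · exact ⟨topInc hxv, topInc_mem_I2 hxv, Sym2.mem_mk_left x v⟩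

noncomputable def someI2 (v : V) : Inc (⊤ : SimpleGraph V) :=
  topInc (exists_ne v).choose_spec

lemma someI2_mem_I2 (v : V) : someI2 v ∈ I2 ⊤ v := topInc_mem_I2 _

variable {k : ℕ} {c : VIElem (⊤ : SimpleGraph V) → Fin k} (hc : IsVISColoring ⊤ 1 c)
include hc

lemma vertex_color_ne_I2_color (x v : V) : c (Sum.inl x) ≠ c (Sum.inr (someI2 v)) := by
  obtain ⟨i, hi, hx⟩ := exists_mem_I2_top_edge_mem x v
  rw [color_eq_of_mem_I2 hc (someI2_mem_I2 v) hi]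
  exact hc.1 _ _ hx

lemma I2_color_injective : Function.Injective fun v => c (Sum.inr (someI2 v)) := by
  intro x y hxy
  by_contra hne
  have hyx : topInc (Ne.symm hne) ≠ topInc hne := fun h => hne (congrArg (·.1.1) h).symm
  refine hc.1 (Sum.inr (topInc (Ne.symm hne))) (Sum.inr (topInc hne))
    ⟨hyx, Or.inr (Or.inl Sym2.eq_swap)⟩ ?_
  rw [color_eq_of_mem_I2 hc (topInc_mem_I2 _) (someI2_mem_I2 x),
    color_eq_of_mem_I2 hc (topInc_mem_I2 _) (someI2_mem_I2 y)]
  exact hxy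

lemma two_mul_card_le_of_isVISColoring_top [Fintype V] : 2 * Fintype.card V ≤ k := by
  have hinj : Function.Injective
      (Sum.elim (fun v => c (Sum.inl v)) fun v => c (Sum.inr (someI2 v))) := by
    refine Function.Injective.sumElim (fun x y hxy => ?_) (I2_color_injective hc)
      (fun x v => vertex_color_ne_I2_color hc x v)
    by_contra hne
    exact hc.1 (Sum.inl x) (Sum.inl y) ((top_adj x y).mpr hne) hxy
  simpa [two_mul] using Fintype.card_le_of_injective _ hinj

end

lemma chiVIS_one_top [Fintype V] [Nontrivial V] :
    chiVIS (⊤ : SimpleGraph V) 1 = 2 * Fintype.card V := by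
  have hcol := colorable_of_fintype (⊤ : SimpleGraph V)
  refine le_antisymm ((chiVIS_one_le_of_colorable hcol).trans_eq (two_mul _).symm) (le_csInf ?_ ?_)
  · exact ⟨_, _, isVISColoring_one_sumMap hcol.some (Fintype.equivFin V).toEmbedding⟩
  · rintro k ⟨c, hc⟩
    exact two_mul_card_le_of_isVISColoring_top hc

lemma eq_top_of_iso_top {V W : Type*} {G : SimpleGraph V} (φ : G ≃g (⊤ : SimpleGraph W)) :
    G = ⊤ := by
  ext u v
  rw [← φ.map_adj_iff, top_adj, top_adj, φ.injective.ne_iff]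

theorem chiVIS_one_eq_two_mul_iff_complete_general {V : Type*} [Fintype V]
    (G : SimpleGraph V) (n : ℕ) (hn : 2 ≤ n) (hcard : Fintype.card V = n) :
    chiVIS G 1 = 2 * n ↔ Nonempty (G ≃g (⊤ : SimpleGraph (Fin n))) := by
  subst hcard
  have : Nontrivial V := Fintype.one_lt_card_iff_nontrivial.mp hn
  constructor
  · intro h
    obtain rfl : G = ⊤ := by
      by_contra hG
      exact (chiVIS_one_lt_of_ne_top hG).ne h
    exact ⟨Iso.completeGraph (Fintype.equivFin V)⟩
  · rintro ⟨φ⟩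
    obtain rfl := eq_top_of_iso_top φ
    exact chiVIS_one_top

/-- Let `n ≥ 2` and let `G` be a finite simple graph on `n` vertices.
Then `χ_{vi,1}(G) = 2n` iff `G` is isomorphic to the complete graph `K_n`. -/
theorem chiVIS_one_eq_two_mul_iff_complete {V : Type*} [Fintype V] [DecidableEq V]
    (G : SimpleGraph V) (n : ℕ) (hn : 2 ≤ n) (hcard : Fintype.card V = n) :
    chiVIS G 1 = 2 * n ↔ Nonempty (G ≃g (⊤ : SimpleGraph (Fin n))) :=
  chiVIS_one_eq_two_mul_iff_complete_general G n hn hcard
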